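/- arXiv:1501.01519 — 2 statements merged into one kernel-verified Lean document; each statement's English description precedes it below -/
import Mathlib

section
/- Let k, N be integers with 0 ≤ k ≤ N−2 and let τ > 0. Define φ(t) = (1/(k+1))·(1 − (τ/t)^{k+1}) for t > 0, and define the vector field χ_τ(y,z) := (φ(|y|)·y, z) for y ∈ ℝ^{k+1} with y ≠ 0 and z ∈ ℝ^{N−k−1}. Then χ_τ is differentiable at every point (y,z) with y ≠ 0, and its divergence satisfies div χ_τ(y,z) = N − k at every such point. -/
/-!
Away from `y = 0`, `χ` is `Prod.map f id` with `f y = φ ‖y‖ • y`. A radial field `g ‖y‖ • y` on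
an `n`-dimensional space has divergence `n g(r) + r g'(r)` at `r = ‖y‖`, which for `g = φ` and
`n = k + 1` is `(1 - (τ/r)^{k+1}) + (τ/r)^{k+1} = 1`; the identity factor adds `N - k - 1`.
-/

open Filter Topology Module

section RadialField

variable {E : Type*} [NormedAddCommGroup E] [InnerProductSpace ℝ E] {y : E}

theorem hasFDerivAt_norm_of_ne_zero (hy : y ≠ 0) :
    HasFDerivAt (fun x : E => ‖x‖) (‖y‖⁻¹ • innerSL ℝ y) y := by
  have h := (hasStrictFDerivAt_norm_sq y).hasFDerivAt.sqrt (by positivity)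
  simp only [Real.sqrt_sq (norm_nonneg _)] at h
  refine h.congr_fderiv ?_
  ext v
  simp only [one_div, mul_inv_rev, smul_apply, coe_innerSL_apply,
    nsmul_eq_mul, Nat.cast_ofNat, smul_eq_mul]
  field_simp

theorem HasDerivAt.hasFDerivAt_smul_self_norm {g : ℝ → ℝ} {g' : ℝ} (hy : y ≠ 0)
    (hg : HasDerivAt g g' ‖y‖) :
    HasFDerivAt (fun x : E => g ‖x‖ • x)
      (g ‖y‖ • ContinuousLinearMap.id ℝ E + (g' * ‖y‖⁻¹) • (innerSL ℝ y).smulRight y) y := by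
  refine ((hg.comp_hasFDerivAt y (hasFDerivAt_norm_of_ne_zero hy)).smul
    (hasFDerivAt_id y)).congr_fderiv ?_
  ext v
  simp [smul_smul]

theorem trace_smul_id_add_smul_innerSL_smulRight [FiniteDimensional ℝ E] (a b : ℝ) :
    LinearMap.trace ℝ E
        (a • ContinuousLinearMap.id ℝ E + b • (innerSL ℝ y).smulRight y).toLinearMap =
      a * finrank ℝ E + b * ‖y‖ ^ 2 := by
  simp [LinearMap.trace_smulRight]

theorem trace_fderiv_smul_self_norm [FiniteDimensional ℝ E] {g : ℝ → ℝ} {g' : ℝ}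
    (hy : y ≠ 0) (hg : HasDerivAt g g' ‖y‖) :
    LinearMap.trace ℝ E (fderiv ℝ (fun x : E => g ‖x‖ • x) y).toLinearMap =
      finrank ℝ E * g ‖y‖ + ‖y‖ * g' := by
  rw [(hg.hasFDerivAt_smul_self_norm hy).fderiv, trace_smul_id_add_smul_innerSL_smulRight]
  field_simp [norm_ne_zero_iff.mpr hy]

end RadialField

theorem hasDerivAt_one_div_mul_one_sub_div_pow (n : ℕ) (τ : ℝ) {r : ℝ} (hr : 0 < r) :
    HasDerivAt (fun t : ℝ => 1 / ((n : ℝ) + 1) * (1 - (τ / t) ^ (n + 1)))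
      ((τ / r) ^ (n + 1) / r) r := by
  have h := ((((hasDerivAt_inv hr.ne').const_mul τ).pow (n + 1)).const_sub 1).const_mul
    (1 / ((n : ℝ) + 1))
  simp only [← div_eq_mul_inv] at h
  refine h.congr_deriv ?_
  rw [Nat.add_sub_cancel]
  simp only [div_pow]
  push_cast
  field_simp
  ring

theorem stmt_1_general (k N : ℕ) (hk : k + 2 ≤ N) (τ : ℝ)
    (φ : ℝ → ℝ)
    (hφ : ∀ t : ℝ, 0 < t → φ t = (1 / ((k : ℝ) + 1)) * (1 - (τ / t) ^ (k + 1)))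
    (χ : EuclideanSpace ℝ (Fin (k + 1)) × EuclideanSpace ℝ (Fin (N - k - 1)) →
         EuclideanSpace ℝ (Fin (k + 1)) × EuclideanSpace ℝ (Fin (N - k - 1)))
    (hχ : ∀ (y : EuclideanSpace ℝ (Fin (k + 1))) (z : EuclideanSpace ℝ (Fin (N - k - 1))),
      y ≠ 0 → χ (y, z) = (φ ‖y‖ • y, z)) :
    ∀ (y : EuclideanSpace ℝ (Fin (k + 1))) (z : EuclideanSpace ℝ (Fin (N - k - 1))),
      y ≠ 0 →
      DifferentiableAt ℝ χ (y, z) ∧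
      LinearMap.trace ℝ (EuclideanSpace ℝ (Fin (k + 1)) × EuclideanSpace ℝ (Fin (N - k - 1)))
        (fderiv ℝ χ (y, z)).toLinearMap = (N : ℝ) - (k : ℝ) := by
  intro y z hy
  have hr : 0 < ‖y‖ := norm_pos_iff.mpr hy
  have hφ' : HasDerivAt φ ((τ / ‖y‖) ^ (k + 1) / ‖y‖) ‖y‖ :=
    (hasDerivAt_one_div_mul_one_sub_div_pow k τ hr).congr_of_eventuallyEq
      (eventuallyEq_of_mem (Ioi_mem_nhds hr) hφ)
  have hχ_eq : χ =ᶠ[𝓝 (y, z)] Prod.map (fun x => φ ‖x‖ • x) id :=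
    eventuallyEq_of_mem ((isOpen_ne_fun continuous_fst continuous_const).mem_nhds hy)
      fun p hp => hχ p.1 p.2 hp
  have hf := (hφ'.hasFDerivAt_smul_self_norm hy).differentiableAt.hasFDerivAt
  have hχ' := (hf.prodMap (y, z) (hasFDerivAt_id z)).congr_of_eventuallyEq hχ_eq
  refine ⟨hχ'.differentiableAt, ?_⟩
  rw [hχ'.fderiv, ContinuousLinearMap.coe_prodMap, LinearMap.trace_prodMap',
    trace_fderiv_smul_self_norm hy hφ', ContinuousLinearMap.coe_id, LinearMap.trace_id,
    finrank_euclideanSpace_fin, finrank_euclideanSpace_fin, hφ _ hr, Nat.cast_sub (by omega),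
    Nat.cast_sub (by omega)]
  field_simp
  push_cast
  ring

/-- Let `0 ≤ k ≤ N−2`, `τ > 0`, `φ(t) = (1/(k+1))·(1 − (τ/t)^{k+1})` and
`χ_τ(y,z) = (φ(|y|)·y, z)` on `ℝ^{k+1} × ℝ^{N−k−1}`.  Then `χ_τ` is differentiable at every
point `(y,z)` with `y ≠ 0` and its divergence (the trace of its total derivative) there
equals `N − k`. -/
theorem stmt_1 (k N : ℕ) (hk : k + 2 ≤ N) (τ : ℝ) (hτ : 0 < τ)
    (φ : ℝ → ℝ)
    (hφ : ∀ t : ℝ, 0 < t → φ t = (1 / ((k : ℝ) + 1)) * (1 - (τ / t) ^ (k + 1)))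
    (χ : EuclideanSpace ℝ (Fin (k + 1)) × EuclideanSpace ℝ (Fin (N - k - 1)) →
         EuclideanSpace ℝ (Fin (k + 1)) × EuclideanSpace ℝ (Fin (N - k - 1)))
    (hχ : ∀ (y : EuclideanSpace ℝ (Fin (k + 1))) (z : EuclideanSpace ℝ (Fin (N - k - 1))),
      y ≠ 0 → χ (y, z) = (φ ‖y‖ • y, z)) :
    ∀ (y : EuclideanSpace ℝ (Fin (k + 1))) (z : EuclideanSpace ℝ (Fin (N - k - 1))),
      y ≠ 0 →
      DifferentiableAt ℝ χ (y, z) ∧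
      LinearMap.trace ℝ (EuclideanSpace ℝ (Fin (k + 1)) × EuclideanSpace ℝ (Fin (N - k - 1)))
        (fderiv ℝ χ (y, z)).toLinearMap = (N : ℝ) - (k : ℝ) :=
  stmt_1_general k N hk τ φ hφ χ hχ
end

section
/- Let n ≥ 1 and k ≥ 0 be integers, N := n + k, λ ∈ ℝ and p > 2. Let Θ be an open subset of (0,∞) × ℝ^{n−1} and let u : Θ → ℝ be twice continuously differentiable and satisfy −div(x₁^k ∇u)(x) = λ·x₁^k·u(x) + x₁^k·|u(x)|^{p−2}·u(x) for every x ∈ Θ, where div(x₁^k ∇u)(x) = Σ_{i=1}^{n} ∂/∂x_i ( x₁^k ∂u/∂x_i )(x). Define Ω := {(y,z) ∈ ℝ^{k+1} × ℝ^{n−1} : (|y|, z) ∈ Θ} and v(y,z) := u(|y|, z). Then v is twice continuously differentiable on Ω and satisfies −Δv(y,z) = λ·v(y,z) + |v(y,z)|^{p−2}·v(y,z) for every (y,z) ∈ Ω. -/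
/-!
Write `v = u ∘ Φ` with `Φ (y, z) = (‖y‖, z)` and `r = ‖y‖ > 0`. The second-order chain rule
along a direction `(e, 0)` gives
`∂²_e v = (⟪y, e⟫ / r)² ∂₁₁u + (‖e‖² - (⟪y, e⟫ / r)²) / r · ∂₁u`, and summing over an
orthonormal basis of `ℝ^{k+1}` (Parseval) yields `Δ_y v = ∂₁₁u + (k / r) ∂₁u`, while the
`z`-directions pass through unchanged. Hence `r^k Δv = div(x₁^k ∇u)` at `Φ (y, z)`, and the
weighted equation for `u` becomes the unweighted one for `v` after dividing by `r^k > 0`.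
-/

noncomputable section

/-- The Laplacian (sum of second partial derivatives with respect to the standard
coordinates) of a function on `ℝ^{k+1} × ℝ^{n−1}`. -/
def lapV (n k : ℕ) (v : EuclideanSpace ℝ (Fin (k + 1)) × EuclideanSpace ℝ (Fin (n - 1)) → ℝ)
    (q : EuclideanSpace ℝ (Fin (k + 1)) × EuclideanSpace ℝ (Fin (n - 1))) : ℝ :=
  (∑ i : Fin (k + 1),
      fderiv ℝ (fun q' => fderiv ℝ v q' (EuclideanSpace.single i 1, 0)) q
        (EuclideanSpace.single i 1, 0)) +
    ∑ j : Fin (n - 1),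
      fderiv ℝ (fun q' => fderiv ℝ v q' (0, EuclideanSpace.single j 1)) q
        (0, EuclideanSpace.single j 1)

/-- `div(x₁^k ∇u)(x) = Σ_{i=1}^{n} ∂/∂x_i ( x₁^k ∂u/∂x_i )(x)` for a function `u` on
`ℝ × ℝ^{n−1}`. -/
def divW (n k : ℕ) (u : ℝ × EuclideanSpace ℝ (Fin (n - 1)) → ℝ)
    (x : ℝ × EuclideanSpace ℝ (Fin (n - 1))) : ℝ :=
  fderiv ℝ (fun x' => x'.1 ^ k * fderiv ℝ u x' (1, 0)) x (1, 0) +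
    ∑ j : Fin (n - 1),
      fderiv ℝ (fun x' => x'.1 ^ k * fderiv ℝ u x' (0, EuclideanSpace.single j 1)) x
        (0, EuclideanSpace.single j 1)

open Filter Topology
open scoped RealInnerProductSpace

section SecondDerivative

variable {X Y G : Type*} [NormedAddCommGroup X] [NormedSpace ℝ X] [NormedAddCommGroup Y]
  [NormedSpace ℝ Y] [NormedAddCommGroup G] [NormedSpace ℝ G]

theorem fderiv_fderiv_apply_comp {u : Y → G} {Φ : X → Y} {q : X}
    (hu : ContDiffAt ℝ 2 u (Φ q)) (hΦ : ContDiffAt ℝ 2 Φ q) (w : X) :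
    fderiv ℝ (fun q' => fderiv ℝ (u ∘ Φ) q' w) q w =
      fderiv ℝ (fderiv ℝ u) (Φ q) (fderiv ℝ Φ q w) (fderiv ℝ Φ q w) +
        fderiv ℝ u (Φ q) (fderiv ℝ (fun q' => fderiv ℝ Φ q' w) q w) := by
  have hchain : (fun q' => fderiv ℝ (u ∘ Φ) q' w) =ᶠ[𝓝 q]
      fun q' => fderiv ℝ u (Φ q') (fderiv ℝ Φ q' w) := by
    filter_upwards [hΦ.eventually (by simp), hΦ.continuousAt.eventually (hu.eventually (by simp))]
      with q' hΦq' huq'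
    rw [fderiv_comp q' (huq'.differentiableAt two_ne_zero) (hΦq'.differentiableAt two_ne_zero)]
    rfl
  have hu' : DifferentiableAt ℝ (fderiv ℝ u) (Φ q) :=
    (hu.fderiv_right le_rfl).differentiableAt one_ne_zero
  have hΦ' : DifferentiableAt ℝ (fun q' => fderiv ℝ Φ q' w) q :=
    ((hΦ.fderiv_right le_rfl).differentiableAt one_ne_zero).clm_apply (differentiableAt_const w)
  have hcomp : HasFDerivAt (fun q' => fderiv ℝ u (Φ q'))
      ((fderiv ℝ (fderiv ℝ u) (Φ q)).comp (fderiv ℝ Φ q)) q :=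
    hu'.hasFDerivAt.comp q (hΦ.differentiableAt two_ne_zero).hasFDerivAt
  rw [hchain.fderiv_eq, (hcomp.clm_apply hΦ'.hasFDerivAt).fderiv]
  simp [add_comm]

end SecondDerivative

section Norm

variable {E : Type*} [NormedAddCommGroup E] [InnerProductSpace ℝ E]

theorem hasStrictFDerivAt_norm {y : E} (hy : y ≠ 0) :
    HasStrictFDerivAt (‖·‖) (‖y‖⁻¹ • innerSL ℝ y) y := by
  have hy' : ‖y‖ ≠ 0 := norm_ne_zero_iff.mpr hy
  convert (hasStrictFDerivAt_norm_sq y).sqrt (pow_ne_zero 2 hy') using 1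
  · simp [Real.sqrt_sq (norm_nonneg _)]
  · ext e
    simp only [smul_apply, coe_innerSL_apply, smul_eq_mul, Real.sqrt_sq (norm_nonneg _),
      nsmul_eq_mul, Nat.cast_ofNat]
    field_simp

theorem fderiv_norm_apply {y : E} (hy : y ≠ 0) (e : E) :
    fderiv ℝ (‖·‖) y e = ⟪y, e⟫ / ‖y‖ := by
  rw [(hasStrictFDerivAt_norm hy).hasFDerivAt.fderiv]
  simp [div_eq_inv_mul]

theorem fderiv_fderiv_norm_apply {y : E} (hy : y ≠ 0) (e : E) :
    fderiv ℝ (fun y' => fderiv ℝ (‖·‖) y' e) y e = (‖e‖ ^ 2 - (⟪y, e⟫ / ‖y‖) ^ 2) / ‖y‖ := by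
  have hy' : ‖y‖ ≠ 0 := norm_ne_zero_iff.mpr hy
  have hloc : (fun y' => fderiv ℝ (‖·‖) y' e) =ᶠ[𝓝 y] fun y' => ⟪y', e⟫ * ‖y'‖⁻¹ := by
    filter_upwards [isOpen_ne.mem_nhds hy] with y' hy'
    rw [fderiv_norm_apply hy', div_eq_mul_inv]
  have hinner : HasFDerivAt (fun y' : E => ⟪y', e⟫) (innerSL ℝ e) y := by
    simpa [real_inner_comm] using (innerSL ℝ e).hasFDerivAt
  have hinv : HasFDerivAt (fun y' : E => ‖y'‖⁻¹) (-(‖y‖ ^ 2)⁻¹ • ‖y‖⁻¹ • innerSL ℝ y) y :=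
    (hasDerivAt_inv hy').comp_hasFDerivAt y
      (hasStrictFDerivAt_norm hy).hasFDerivAt
  rw [hloc.fderiv_eq, (hinner.fun_mul hinv).fderiv]
  simp only [add_apply, smul_apply, coe_innerSL_apply, smul_eq_mul, real_inner_self_eq_norm_sq]
  field_simp
  ring

end Norm

section ProdMap

variable {X Y F : Type*} [NormedAddCommGroup X] [NormedSpace ℝ X] [NormedAddCommGroup Y]
  [NormedSpace ℝ Y] [NormedAddCommGroup F] [NormedSpace ℝ F]

theorem fderiv_prodMap_id_apply {f : X → Y} {q : X × F} (hf : DifferentiableAt ℝ f q.1)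
    (w : X × F) : fderiv ℝ (Prod.map f id) q w = (fderiv ℝ f q.1 w.1, w.2) := by
  rw [(HasFDerivAt.prodMap q hf.hasFDerivAt (hasFDerivAt_id q.2)).fderiv]
  rfl

theorem fderiv_fderiv_prodMap_id_apply {f : X → Y} {q : X × F} (hf : ContDiffAt ℝ 2 f q.1)
    (w w' : X × F) :
    fderiv ℝ (fun q' => fderiv ℝ (Prod.map f id) q' w) q w' =
      (fderiv ℝ (fun x => fderiv ℝ f x w.1) q.1 w'.1, 0) := by
  have hloc : (fun q' => fderiv ℝ (Prod.map f id) q' w) =ᶠ[𝓝 q]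
      fun q' => (fderiv ℝ f q'.1 w.1, w.2) := by
    filter_upwards [continuousAt_fst.eventually (hf.eventually (by simp))] with q' hq'
    exact fderiv_prodMap_id_apply (hq'.differentiableAt two_ne_zero) w
  have hdf : DifferentiableAt ℝ (fun x => fderiv ℝ f x w.1) q.1 :=
    ((hf.fderiv_right le_rfl).differentiableAt one_ne_zero).clm_apply (differentiableAt_const _)
  have hderiv : HasFDerivAt (fun q' : X × F => (fderiv ℝ f q'.1 w.1, w.2))
      (((fderiv ℝ (fun x => fderiv ℝ f x w.1) q.1).comp (ContinuousLinearMap.fst ℝ X F)).prod 0)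
      q :=
    (hdf.hasFDerivAt.comp q hasFDerivAt_fst).prodMk (hasFDerivAt_const w.2 q)
  rw [hloc.fderiv_eq, hderiv.fderiv]
  simp

end ProdMap

section Radial

variable {E F : Type*} [NormedAddCommGroup E] [InnerProductSpace ℝ E] [NormedAddCommGroup F]
  [NormedSpace ℝ F] {u : ℝ × F → ℝ} {q : E × F}

theorem fderiv_fderiv_comp_prodMap_norm_apply_inl (hy : q.1 ≠ 0)
    (hu : ContDiffAt ℝ 2 u (‖q.1‖, q.2)) (e : E) :
    fderiv ℝ (fun q' => fderiv ℝ (u ∘ Prod.map (‖·‖) id) q' (e, 0)) q (e, 0) =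
      (⟪q.1, e⟫ / ‖q.1‖) ^ 2 * fderiv ℝ (fderiv ℝ u) (‖q.1‖, q.2) (1, 0) (1, 0) +
        (‖e‖ ^ 2 - (⟪q.1, e⟫ / ‖q.1‖) ^ 2) / ‖q.1‖ * fderiv ℝ u (‖q.1‖, q.2) (1, 0) := by
  have hnorm : ContDiffAt ℝ 2 (‖·‖) q.1 := contDiffAt_norm ℝ hy
  have hline : ∀ c : ℝ, (c, (0 : F)) = c • ((1 : ℝ), (0 : F)) := by simp
  rw [fderiv_fderiv_apply_comp (Φ := Prod.map (‖·‖) id) hu (hnorm.prodMap' contDiffAt_id),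
    fderiv_prodMap_id_apply (hnorm.differentiableAt two_ne_zero),
    fderiv_fderiv_prodMap_id_apply hnorm, fderiv_norm_apply hy, fderiv_fderiv_norm_apply hy,
    hline, hline ((_ - _) / _)]
  simp only [Prod.map, id, map_smul, FunLike.coe_smul, Pi.smul_apply, smul_eq_mul]
  ring

theorem fderiv_fderiv_comp_prodMap_norm_apply_inr (hy : q.1 ≠ 0)
    (hu : ContDiffAt ℝ 2 u (‖q.1‖, q.2)) (w : F) :
    fderiv ℝ (fun q' => fderiv ℝ (u ∘ Prod.map (‖·‖) id) q' (0, w)) q (0, w) =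
      fderiv ℝ (fderiv ℝ u) (‖q.1‖, q.2) (0, w) (0, w) := by
  have hnorm : ContDiffAt ℝ 2 (‖·‖) q.1 := contDiffAt_norm ℝ hy
  rw [fderiv_fderiv_apply_comp (Φ := Prod.map (‖·‖) id) hu (hnorm.prodMap' contDiffAt_id),
    fderiv_prodMap_id_apply (hnorm.differentiableAt two_ne_zero),
    fderiv_fderiv_prodMap_id_apply hnorm]
  simp [Prod.map, Prod.mk_zero_zero]

theorem sum_fderiv_fderiv_comp_prodMap_norm_apply {ι : Type*} [Fintype ι]
    (b : OrthonormalBasis ι ℝ E) (hy : q.1 ≠ 0) (hu : ContDiffAt ℝ 2 u (‖q.1‖, q.2)) :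
    ∑ i, fderiv ℝ (fun q' => fderiv ℝ (u ∘ Prod.map (‖·‖) id) q' (b i, 0)) q (b i, 0) =
      fderiv ℝ (fderiv ℝ u) (‖q.1‖, q.2) (1, 0) (1, 0) +
        (Fintype.card ι - 1) / ‖q.1‖ * fderiv ℝ u (‖q.1‖, q.2) (1, 0) := by
  have hr : ‖q.1‖ ≠ 0 := norm_ne_zero_iff.mpr hy
  have hcos : ∑ i, (⟪q.1, b i⟫ / ‖q.1‖) ^ 2 = 1 := by
    simp_rw [div_pow]
    rw [← Finset.sum_div, b.sum_sq_inner_left, div_self (pow_ne_zero 2 hr)]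
  simp_rw [fderiv_fderiv_comp_prodMap_norm_apply_inl hy hu, b.norm_eq_one, one_pow]
  generalize fderiv ℝ (fderiv ℝ u) (‖q.1‖, q.2) (1, 0) (1, 0) = B
  generalize fderiv ℝ u (‖q.1‖, q.2) (1, 0) = A
  generalize ‖q.1‖ = r at hr hcos ⊢
  have hterm : ∀ i, (⟪q.1, b i⟫ / r) ^ 2 * B + (1 - (⟪q.1, b i⟫ / r) ^ 2) / r * A =
      (⟪q.1, b i⟫ / r) ^ 2 * (B - A / r) + A / r := fun i => by ring
  rw [Finset.sum_congr rfl fun i _ => hterm i, Finset.sum_add_distrib, ← Finset.sum_mul, hcos,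
    Finset.sum_const, Finset.card_univ, nsmul_eq_mul]
  ring

end Radial

theorem lapV_comp_prodMap_norm {n k : ℕ}
    {u : ℝ × EuclideanSpace ℝ (Fin (n - 1)) → ℝ}
    {q : EuclideanSpace ℝ (Fin (k + 1)) × EuclideanSpace ℝ (Fin (n - 1))}
    (hy : q.1 ≠ 0) (hu : ContDiffAt ℝ 2 u (‖q.1‖, q.2)) :
    lapV n k (u ∘ Prod.map (‖·‖) id) q =
      fderiv ℝ (fderiv ℝ u) (‖q.1‖, q.2) (1, 0) (1, 0) +
        k / ‖q.1‖ * fderiv ℝ u (‖q.1‖, q.2) (1, 0) +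
        ∑ j : Fin (n - 1), fderiv ℝ (fderiv ℝ u) (‖q.1‖, q.2)
          (0, EuclideanSpace.single j 1) (0, EuclideanSpace.single j 1) := by
  have hradial := sum_fderiv_fderiv_comp_prodMap_norm_apply
    (EuclideanSpace.basisFun (Fin (k + 1)) ℝ) hy hu
  unfold lapV
  simp only [EuclideanSpace.basisFun_apply, Fintype.card_fin] at hradial
  simp_rw [hradial, fderiv_fderiv_comp_prodMap_norm_apply_inr hy hu]
  push_cast
  ring

theorem fderiv_pow_fst_mul_fderiv_apply {F : Type*} [NormedAddCommGroup F] [NormedSpace ℝ F]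
    {u : ℝ × F → ℝ} {x : ℝ × F} (hu : DifferentiableAt ℝ (fderiv ℝ u) x) (k : ℕ)
    (w : ℝ × F) :
    fderiv ℝ (fun x' => x'.1 ^ k * fderiv ℝ u x' w) x w =
      k * x.1 ^ (k - 1) * w.1 * fderiv ℝ u x w + x.1 ^ k * fderiv ℝ (fderiv ℝ u) x w w := by
  have hpow : HasFDerivAt (fun x' : ℝ × F => x'.1 ^ k)
      ((k * x.1 ^ (k - 1)) • ContinuousLinearMap.fst ℝ ℝ F) x :=
    (hasDerivAt_pow k x.1).comp_hasFDerivAt x hasFDerivAt_fst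
  have hdu : HasFDerivAt (fun x' => fderiv ℝ u x' w)
      ((ContinuousLinearMap.apply ℝ ℝ w).comp (fderiv ℝ (fderiv ℝ u) x)) x :=
    (ContinuousLinearMap.apply ℝ ℝ w).hasFDerivAt.comp x hu.hasFDerivAt
  rw [(hpow.fun_mul hdu).fderiv]
  simp only [add_apply, FunLike.coe_smul, Pi.smul_apply,
    ContinuousLinearMap.comp_apply, ContinuousLinearMap.apply_apply,
    ContinuousLinearMap.coe_fst', smul_eq_mul]
  ring

theorem divW_eq {n k : ℕ} {u : ℝ × EuclideanSpace ℝ (Fin (n - 1)) → ℝ}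
    {x : ℝ × EuclideanSpace ℝ (Fin (n - 1))} (hu : DifferentiableAt ℝ (fderiv ℝ u) x) :
    divW n k u x = k * x.1 ^ (k - 1) * fderiv ℝ u x (1, 0) +
      x.1 ^ k * (fderiv ℝ (fderiv ℝ u) x (1, 0) (1, 0) +
        ∑ j : Fin (n - 1), fderiv ℝ (fderiv ℝ u) x
          (0, EuclideanSpace.single j 1) (0, EuclideanSpace.single j 1)) := by
  unfold divW
  simp_rw [fderiv_pow_fst_mul_fderiv_apply hu]
  simp only [mul_zero, zero_mul, zero_add, mul_one, ← Finset.mul_sum]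
  ring

theorem pow_mul_lapV_comp_prodMap_norm {n k : ℕ}
    {u : ℝ × EuclideanSpace ℝ (Fin (n - 1)) → ℝ}
    {q : EuclideanSpace ℝ (Fin (k + 1)) × EuclideanSpace ℝ (Fin (n - 1))}
    (hy : q.1 ≠ 0) (hu : ContDiffAt ℝ 2 u (‖q.1‖, q.2)) :
    ‖q.1‖ ^ k * lapV n k (u ∘ Prod.map (‖·‖) id) q = divW n k u (‖q.1‖, q.2) := by
  have hr : ‖q.1‖ ≠ 0 := norm_ne_zero_iff.mpr hy
  -- `k - 1` is truncated subtraction, hence the case split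
  have hpow : ‖q.1‖ ^ k * (k / ‖q.1‖) = k * ‖q.1‖ ^ (k - 1) := by
    rcases k with _ | k
    · simp
    · rw [pow_succ]
      field_simp
      simp
  rw [lapV_comp_prodMap_norm hy hu,
    divW_eq ((hu.fderiv_right le_rfl).differentiableAt one_ne_zero), ← hpow]
  ring

theorem stmt_4_general (n k : ℕ) (lam p : ℝ)
    (Θ : Set (ℝ × EuclideanSpace ℝ (Fin (n - 1)))) (hΘopen : IsOpen Θ)
    (hΘpos : ∀ x ∈ Θ, 0 < x.1)
    (u : ℝ × EuclideanSpace ℝ (Fin (n - 1)) → ℝ) (hu : ContDiffOn ℝ 2 u Θ)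
    (hpde : ∀ x ∈ Θ,
      -divW n k u x = lam * x.1 ^ k * u x + x.1 ^ k * |u x| ^ (p - 2) * u x)
    (Ω : Set (EuclideanSpace ℝ (Fin (k + 1)) × EuclideanSpace ℝ (Fin (n - 1))))
    (hΩ : Ω = {q | (‖q.1‖, q.2) ∈ Θ})
    (v : EuclideanSpace ℝ (Fin (k + 1)) × EuclideanSpace ℝ (Fin (n - 1)) → ℝ)
    (hv : ∀ q, v q = u (‖q.1‖, q.2)) :
    ContDiffOn ℝ 2 v Ω ∧
    ∀ q ∈ Ω, -lapV n k v q = lam * v q + |v q| ^ (p - 2) * v q := by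
  obtain rfl : v = u ∘ Prod.map (‖·‖) id := funext hv
  have hΘq : ∀ q ∈ Ω, (‖q.1‖, q.2) ∈ Θ := fun q hq => by rwa [hΩ] at hq
  have hy : ∀ q ∈ Ω, q.1 ≠ 0 := fun q hq => norm_pos_iff.mp (hΘpos _ (hΘq q hq))
  have huq : ∀ q ∈ Ω, ContDiffAt ℝ 2 u (‖q.1‖, q.2) :=
    fun q hq => hu.contDiffAt (hΘopen.mem_nhds (hΘq q hq))
  refine ⟨fun q hq => ((huq q hq).comp q
    ((contDiffAt_norm ℝ (hy q hq)).prodMap' contDiffAt_id)).contDiffWithinAt, fun q hq => ?_⟩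
  have hscaled := pow_mul_lapV_comp_prodMap_norm (hy q hq) (huq q hq)
  apply mul_left_cancel₀ (pow_ne_zero k (hΘpos _ (hΘq q hq)).ne')
  rw [hv q]
  linear_combination (-1 : ℝ) * hscaled + hpde _ (hΘq q hq)

/-- if `u` is `C²` on an open `Θ ⊆ (0,∞) × ℝ^{n−1}` and satisfies
`−div(x₁^k ∇u) = λ·x₁^k·u + x₁^k·|u|^{p−2}·u` on `Θ`, then `v(y,z) := u(|y|,z)` is `C²` on
`Ω = {(y,z) : (|y|,z) ∈ Θ}` and satisfies `−Δv = λ·v + |v|^{p−2}·v` on `Ω`. -/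
theorem stmt_4 (n k : ℕ) (hn : 1 ≤ n) (lam p : ℝ) (hp : 2 < p)
    (Θ : Set (ℝ × EuclideanSpace ℝ (Fin (n - 1)))) (hΘopen : IsOpen Θ)
    (hΘpos : ∀ x ∈ Θ, 0 < x.1)
    (u : ℝ × EuclideanSpace ℝ (Fin (n - 1)) → ℝ) (hu : ContDiffOn ℝ 2 u Θ)
    (hpde : ∀ x ∈ Θ,
      -divW n k u x = lam * x.1 ^ k * u x + x.1 ^ k * |u x| ^ (p - 2) * u x)
    (Ω : Set (EuclideanSpace ℝ (Fin (k + 1)) × EuclideanSpace ℝ (Fin (n - 1))))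
    (hΩ : Ω = {q | (‖q.1‖, q.2) ∈ Θ})
    (v : EuclideanSpace ℝ (Fin (k + 1)) × EuclideanSpace ℝ (Fin (n - 1)) → ℝ)
    (hv : ∀ q, v q = u (‖q.1‖, q.2)) :
    ContDiffOn ℝ 2 v Ω ∧
    ∀ q ∈ Ω, -lapV n k v q = lam * v q + |v q| ^ (p - 2) * v q :=
  stmt_4_general n k lam p Θ hΘopen hΘpos u hu hpde Ω hΩ v hv

end
end
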